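/- In the unbounded forecasting game with general hedge h satisfying (A0)-(A2) and h(0)=0, and with g a positive increasing function, Reality can strongly comply with the event: ∑_n v_n/g(A_n) < ∞ if and only if (∑_{k=1}^n (x_k - m_k)) / (h^{-1} ∘ g)(A_n) converges. -/

import Mathlib

/-
Reality plays `x n = m n + y n`. Write `c n = h⁻¹ (g (A n))`. At an *escape* round Reality may
play `y n = ± c n` with the sign opposite to `M n`: then `h (y n) = g (A n)` and `M n * y n ≤ 0`,
so Skeptic gains at most `V n * (g (A n) - v n)`. Escapes are allowed only when this is at most
the slack `1 - K n` and fewer escapes have happened than `∑_{k<n} v k / g (A k)`. Choosing between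
`y n = 0` and the escape move, Reality makes the ratio `S n / c n` jump by at least `1/2`; at all
other rounds `y n = 0`, so the capital never exceeds `1`.

If `∑ v n / g (A n) < ∞` there are finitely many escapes, so `S n` is eventually constant and
`S n / c n` converges because `c n` is monotone. If the series diverges and escapes stop, the
budget condition eventually holds, so the slack condition fails: `1 - K n < V n * (g (A n) - v n)`.
Then the slack grows at least by the factor `1 + v n / g (A n)` per round, which is impossible
for a quantity bounded by `1` along a divergent series. Hence escapes recur and the ratio does
not converge.
-/

open Filter Finset

/-- Capital process in the unbounded forecasting game with general hedge `h`,
initial capital 1. -/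
def capitalH (h : ℝ → ℝ) (m v M V x : ℕ → ℝ) : ℕ → ℝ
  | 0 => 1
  | n + 1 => capitalH h m v M V x n + M n * (x n - m n) +
      V n * (h (x n - m n) - v n)

open Topology

theorem half_le_max_abs_sub (a p s : ℝ) (hs : |s| = 1) : 1 / 2 ≤ max |a - p| |a + s - p| := by
  have : |s| ≤ |a + s - p| + |a - p| := by
    simpa only [sub_sub_sub_cancel_right, add_sub_cancel_left] using abs_sub (a + s - p) (a - p)
  rw [le_max_iff]
  by_contra!
  linarith

theorem not_tendsto_of_frequently_le_abs_sub {u : ℕ → ℝ} {ε L : ℝ} (hε : 0 < ε)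
    (hu : ∃ᶠ n in atTop, ε ≤ |u (n + 1) - u n|) : ¬ Tendsto u atTop (𝓝 L) := fun hL => by
  have hdiff : Tendsto (fun n => |u (n + 1) - u n|) atTop (𝓝 0) := by
    simpa using ((hL.comp (tendsto_add_atTop_nat 1)).sub hL).abs
  exact hu (hdiff.eventually (gt_mem_nhds hε) |>.mono fun _ hn => not_le.2 hn)

theorem summable_of_mul_one_add_le {σ w : ℕ → ℝ} {B : ℝ} (hw : ∀ n, 0 ≤ w n) (hσ₀ : 0 < σ 0)
    (hσ : ∀ n, σ n * (1 + w n) ≤ σ (n + 1)) (hB : ∀ n, σ n ≤ B) : Summable w := by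
  have hgrowth : ∀ n, σ 0 * (1 + ∑ k ∈ range n, w k) ≤ σ n := by
    intro n
    induction n with
    | zero => simp
    | succ n ih =>
      have hσn : σ 0 ≤ σ n := le_trans (le_mul_of_one_le_right hσ₀.le
        (le_add_of_nonneg_right (sum_nonneg fun k _ => hw k))) ih
      rw [sum_range_succ]
      nlinarith [hσ n, hw n]
  refine summable_of_sum_range_le (c := B / σ 0) hw fun n => ?_
  rw [le_div_iff₀ hσ₀]
  nlinarith [hgrowth n, hB n]

theorem exists_tendsto_div_of_monotone {c : ℕ → ℝ} (hc : Monotone c) (hpos : ∀ n, 0 < c n)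
    (a : ℝ) : ∃ L, Tendsto (fun n => a / c n) atTop (𝓝 L) := by
  rcases tendsto_atTop_of_monotone hc with htop | ⟨l, hl⟩
  · exact ⟨0, by simpa [div_eq_mul_inv] using htop.inv_tendsto_atTop.const_mul a⟩
  · exact ⟨a / l, tendsto_const_nhds.div hl ((hpos 0).trans_le (hc.ge_of_tendsto hl 0)).ne'⟩

section HedgeInverse

variable {h hinv : ℝ → ℝ}

theorem hinv_nonneg (hsymm : ∀ x, h x = h |x|) (hinv_left : ∀ x, 0 ≤ x → hinv (h x) = x)
    (hinv_right : ∀ y, 0 ≤ y → h (hinv y) = y) {y : ℝ} (hy : 0 ≤ y) : 0 ≤ hinv y := by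
  have habs : |hinv y| = hinv y := by
    rw [← hinv_left _ (abs_nonneg _), ← hsymm, hinv_right y hy]
  rw [← habs]
  exact abs_nonneg _

theorem hinv_pos (hsymm : ∀ x, h x = h |x|) (hinv_left : ∀ x, 0 ≤ x → hinv (h x) = x)
    (hinv_right : ∀ y, 0 ≤ y → h (hinv y) = y) (h0 : h 0 = 0) {y : ℝ} (hy : 0 < y) :
    0 < hinv y := by
  refine (hinv_nonneg hsymm hinv_left hinv_right hy.le).lt_of_ne fun hzero => ?_
  have := hinv_right y hy.le
  rw [← hzero, h0] at this
  exact hy.ne this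

theorem monotoneOn_hinv (hmono : StrictMonoOn h (Set.Ici 0))
    (hinv_right : ∀ y, 0 ≤ y → h (hinv y) = y) (hnonneg : ∀ y, 0 ≤ y → 0 ≤ hinv y) :
    MonotoneOn hinv (Set.Ici 0) := fun a ha b hb hab =>
  (hmono.le_iff_le (hnonneg a ha) (hnonneg b hb)).1 (by rwa [hinv_right a ha, hinv_right b hb])

theorem apply_mul_hinv (hsymm : ∀ x, h x = h |x|) (hinv_right : ∀ y, 0 ≤ y → h (hinv y) = y)
    {s y : ℝ} (hs : |s| = 1) (hy : 0 ≤ y) : h (s * hinv y) = y := by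
  rw [hsymm, abs_mul, hs, one_mul, ← hsymm, hinv_right y hy]

end HedgeInverse

namespace HedgeGame

/-- `cumVar v n = v 0 + ⋯ + v (n - 1)`, so the paper's `A n` is `cumVar v (n + 1)`. -/
def cumVar (v : ℕ → ℝ) (n : ℕ) : ℝ := ∑ k ∈ range n, v k

noncomputable section

def weight (g : ℝ → ℝ) (v : ℕ → ℝ) (n : ℕ) : ℝ := v n / g (cumVar v (n + 1))

def scale (hinv g : ℝ → ℝ) (v : ℕ → ℝ) (n : ℕ) : ℝ := hinv (g (cumVar v n))

def oppSign (x : ℝ) : ℝ := if 0 < x then -1 else 1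

/-- Reality's memory before round `n`: Skeptic's capital `K n`, `S n = ∑ k < n, (x k - m k)`,
and the number of escape rounds so far. -/
structure State where
  capital : ℝ
  sum : ℝ
  escapes : ℕ

def CanEscape (g : ℝ → ℝ) (v V : ℕ → ℝ) (n : ℕ) (st : State) : Prop :=
  V n * (g (cumVar v (n + 1)) - v n) ≤ 1 - st.capital ∧
    (st.escapes : ℝ) < ∑ k ∈ range n, weight g v k

/-- The escape adds `oppSign (M n)` to the ratio `sum / scale (n + 1)`; Reality escapes only if
this puts the ratio farther from its previous value `sum / scale n`. -/
def move (hinv g : ℝ → ℝ) (v M V : ℕ → ℝ) (n : ℕ) (st : State) : ℝ :=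
  open Classical in
  if CanEscape g v V n st ∧
      |st.sum / scale hinv g v (n + 1) - st.sum / scale hinv g v n| ≤
        |st.sum / scale hinv g v (n + 1) + oppSign (M n) - st.sum / scale hinv g v n| then
    oppSign (M n) * scale hinv g v (n + 1)
  else 0

def step (h hinv g : ℝ → ℝ) (v M V : ℕ → ℝ) (n : ℕ) (st : State) : State where
  capital := st.capital + M n * move hinv g v M V n st + V n * (h (move hinv g v M V n st) - v n)
  sum := st.sum + move hinv g v M V n st
  escapes := st.escapes + open Classical in if CanEscape g v V n st then 1 else 0

def state (h hinv g : ℝ → ℝ) (v M V : ℕ → ℝ) : ℕ → State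
  | 0 => ⟨1, 0, 0⟩
  | n + 1 => step h hinv g v M V n (state h hinv g v M V n)

def ratio (h hinv g : ℝ → ℝ) (v M V : ℕ → ℝ) (n : ℕ) : ℝ :=
  (state h hinv g v M V n).sum / scale hinv g v n

def strategy (h hinv g : ℝ → ℝ) (m v M V : ℕ → ℝ) (n : ℕ) : ℝ :=
  m n + move hinv g v M V n (state h hinv g v M V n)

end

section Game

variable {h hinv g : ℝ → ℝ} {v M V : ℕ → ℝ}

theorem state_succ (n : ℕ) :
    state h hinv g v M V (n + 1) = step h hinv g v M V n (state h hinv g v M V n) := rfl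

theorem cumVar_congr {v' : ℕ → ℝ} {n : ℕ} (hv : ∀ k < n, v k = v' k) :
    cumVar v n = cumVar v' n :=
  sum_congr rfl fun k hk => hv k (mem_range.1 hk)

theorem cumVar_mono (hv : ∀ n, 0 ≤ v n) : Monotone (cumVar v) := fun _ _ hab =>
  sum_le_sum_of_subset_of_nonneg (range_subset_range.2 hab) fun k _ _ => hv k

theorem weight_nonneg (hg : ∀ x, 0 < g x) (hv : ∀ n, 0 ≤ v n) (n : ℕ) : 0 ≤ weight g v n :=
  div_nonneg (hv n) (hg _).le

theorem mul_oppSign_nonpos (x : ℝ) : x * oppSign x ≤ 0 := by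
  unfold oppSign
  split_ifs with hx
  · linarith
  · linarith [not_lt.1 hx]

theorem abs_oppSign (x : ℝ) : |oppSign x| = 1 := by
  unfold oppSign
  split_ifs <;> simp

theorem canEscape_congr {v' V' : ℕ → ℝ} {n : ℕ} (hv : ∀ k ≤ n, v k = v' k) (hV : V n = V' n)
    (st : State) : CanEscape g v V n st ↔ CanEscape g v' V' n st := by
  have hA : ∀ k ≤ n + 1, cumVar v k = cumVar v' k := fun k hk =>
    cumVar_congr fun i hi => hv i (by omega)
  have hw : ∑ k ∈ range n, weight g v k = ∑ k ∈ range n, weight g v' k :=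
    sum_congr rfl fun k hk => by
      have hk := mem_range.1 hk
      rw [weight, weight, hv k hk.le, hA (k + 1) (by omega)]
  rw [CanEscape, CanEscape, hA (n + 1) le_rfl, hw, hV, hv n le_rfl]

theorem move_congr {v' M' V' : ℕ → ℝ} {n : ℕ} (hv : ∀ k ≤ n, v k = v' k) (hM : M n = M' n)
    (hV : V n = V' n) (st : State) : move hinv g v M V n st = move hinv g v' M' V' n st := by
  have hscale : ∀ k ≤ n + 1, scale hinv g v k = scale hinv g v' k := fun k hk => by
    rw [scale, scale, cumVar_congr fun i hi => hv i (by omega)]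
  rw [move, move, propext (canEscape_congr hv hV st), hscale n n.le_succ, hscale (n + 1) le_rfl, hM]

theorem state_congr {v' M' V' : ℕ → ℝ} (n : ℕ) (hv : ∀ k < n, v k = v' k)
    (hM : ∀ k < n, M k = M' k) (hV : ∀ k < n, V k = V' k) :
    state h hinv g v M V n = state h hinv g v' M' V' n := by
  induction n with
  | zero => rfl
  | succ n ih =>
    have hv' : ∀ k ≤ n, v k = v' k := fun k hk => hv k (Nat.lt_succ_of_le hk)
    rw [state_succ, state_succ, ih (fun k hk => hv' k hk.le) (fun k hk => hM k (by omega))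
      (fun k hk => hV k (by omega)), step, step, move_congr hv' (hM n n.lt_succ_self) (hV n n.lt_succ_self),
      propext (canEscape_congr hv' (hV n n.lt_succ_self) _), hM n n.lt_succ_self,
      hV n n.lt_succ_self, hv n n.lt_succ_self]

theorem strategy_congr {m m' v' M' V' : ℕ → ℝ} {n : ℕ} (hm : ∀ k ≤ n, m k = m' k)
    (hv : ∀ k ≤ n, v k = v' k) (hM : ∀ k ≤ n, M k = M' k) (hV : ∀ k ≤ n, V k = V' k) :
    strategy h hinv g m v M V n = strategy h hinv g m' v' M' V' n := by
  rw [strategy, strategy, hm n le_rfl, move_congr hv (hM n le_rfl) (hV n le_rfl),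
    state_congr n (fun k hk => hv k hk.le) (fun k hk => hM k hk.le) (fun k hk => hV k hk.le)]

theorem capitalH_strategy (m : ℕ → ℝ) (n : ℕ) :
    capitalH h m v M V (strategy h hinv g m v M V) n = (state h hinv g v M V n).capital := by
  induction n with
  | zero => rfl
  | succ n ih => rw [capitalH, ih, strategy, add_sub_cancel_left]; rfl

theorem sum_range_strategy_sub (m : ℕ → ℝ) (n : ℕ) :
    ∑ k ∈ range n, (strategy h hinv g m v M V k - m k) = (state h hinv g v M V n).sum := by
  induction n with
  | zero => rfl
  | succ n ih => rw [sum_range_succ, ih, strategy, add_sub_cancel_left]; rfl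

theorem move_of_not_canEscape {n : ℕ} {st : State} (hst : ¬ CanEscape g v V n st) :
    move hinv g v M V n st = 0 :=
  if_neg fun hesc => hst hesc.1

theorem move_eq_zero_or (n : ℕ) (st : State) :
    move hinv g v M V n st = 0 ∨
      CanEscape g v V n st ∧ move hinv g v M V n st = oppSign (M n) * scale hinv g v (n + 1) := by
  unfold move
  split_ifs with hesc
  exacts [Or.inr ⟨hesc.1, rfl⟩, Or.inl rfl]

theorem capital_le_one (h0 : h 0 = 0)
    (hh_scale : ∀ x n, h (oppSign x * scale hinv g v n) = g (cumVar v n))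
    (hscale_pos : ∀ n, 0 < scale hinv g v n) (hv : ∀ n, 0 ≤ v n) (hV : ∀ n, 0 ≤ V n) (n : ℕ) :
    (state h hinv g v M V n).capital ≤ 1 := by
  induction n with
  | zero => exact le_rfl
  | succ n ih =>
    rw [state_succ, step]
    rcases move_eq_zero_or (hinv := hinv) (M := M) n (state h hinv g v M V n) with
      hmove | ⟨hesc, hmove⟩
    · rw [hmove, h0]
      nlinarith [mul_nonneg (hV n) (hv n)]
    · rw [hmove, hh_scale]
      nlinarith [hesc.1, mul_oppSign_nonpos (M n), hscale_pos (n + 1)]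

theorem half_le_abs_ratio_sub (hscale_pos : ∀ n, 0 < scale hinv g v n) {n : ℕ}
    (hesc : CanEscape g v V n (state h hinv g v M V n)) :
    1 / 2 ≤ |ratio h hinv g v M V (n + 1) - ratio h hinv g v M V n| := by
  set st := state h hinv g v M V n
  set c := scale hinv g v (n + 1)
  have hjump := half_le_max_abs_sub (st.sum / c) (st.sum / scale hinv g v n) _ (abs_oppSign (M n))
  simp only [ratio, state_succ, step]
  by_cases hfar : |st.sum / c - st.sum / scale hinv g v n| ≤
      |st.sum / c + oppSign (M n) - st.sum / scale hinv g v n|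
  · have hmove : move hinv g v M V n st = oppSign (M n) * c := if_pos ⟨hesc, hfar⟩
    rwa [hmove, add_div, mul_div_cancel_right₀ _ (hscale_pos (n + 1)).ne', ← max_eq_right hfar]
  · have hmove : move hinv g v M V n st = 0 := if_neg fun h' => hfar h'.2
    rwa [hmove, add_zero, ← max_eq_left (le_of_not_ge hfar)]

theorem escapes_le_tsum (hg : ∀ x, 0 < g x) (hv : ∀ n, 0 ≤ v n) (hs : Summable (weight g v))
    (n : ℕ) : ((state h hinv g v M V n).escapes : ℝ) ≤ ∑' k, weight g v k + 1 := by
  induction n with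
  | zero => simpa [state] using add_nonneg (tsum_nonneg (weight_nonneg hg hv)) zero_le_one
  | succ n ih =>
    rw [state_succ, step]
    split_ifs with hesc
    · have := hs.sum_le_tsum (range n) fun k _ => weight_nonneg hg hv k
      push_cast
      linarith [hesc.2]
    · simpa using ih

theorem eventually_not_canEscape (hg : ∀ x, 0 < g x) (hv : ∀ n, 0 ≤ v n)
    (hs : Summable (weight g v)) :
    ∀ᶠ n in atTop, ¬ CanEscape g v V n (state h hinv g v M V n) := by
  set j := fun n => (state h hinv g v M V n).escapes
  have hbdd : BddAbove (Set.range j) := ⟨⌈∑' k, weight g v k + 1⌉₊, by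
    rintro _ ⟨n, rfl⟩
    exact_mod_cast (escapes_le_tsum hg hv hs n).trans (Nat.le_ceil _)⟩
  obtain ⟨N, hN⟩ := Nat.sSup_mem (Set.range_nonempty j) hbdd
  refine eventually_atTop.2 ⟨N, fun n hn hesc => ?_⟩
  have hmono : Monotone j := monotone_nat_of_le_succ fun n => Nat.le_add_right _ _
  have hsucc : j (n + 1) = j n + 1 := by simp [j, state_succ, step, hesc]
  have hmax : j (n + 1) ≤ j N := hN ▸ le_csSup hbdd ⟨n + 1, rfl⟩
  have := hmono hn
  omega

theorem exists_tendsto_ratio_of_summable (hg : ∀ x, 0 < g x) (hv : ∀ n, 0 ≤ v n)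
    (hscale_pos : ∀ n, 0 < scale hinv g v n) (hscale_mono : Monotone (scale hinv g v))
    (hs : Summable (weight g v)) : ∃ L, Tendsto (ratio h hinv g v M V) atTop (𝓝 L) := by
  obtain ⟨N, hN⟩ := eventually_atTop.1 (eventually_not_canEscape (h := h) (M := M) hg hv hs)
  have hsum : ∀ n ≥ N, (state h hinv g v M V n).sum = (state h hinv g v M V N).sum := by
    intro n hn
    induction n, hn using Nat.le_induction with
    | base => rfl
    | succ n hn ih => rw [state_succ, step, move_of_not_canEscape (hN n hn), add_zero, ih]
  obtain ⟨L, hL⟩ :=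
    exists_tendsto_div_of_monotone hscale_mono hscale_pos (state h hinv g v M V N).sum
  exact ⟨L, hL.congr' (eventually_atTop.2 ⟨N, fun n hn => by rw [ratio, hsum n hn]⟩)⟩

theorem summable_weight_of_slack_lt (h0 : h 0 = 0) (hg : ∀ x, 0 < g x) (hv : ∀ n, 0 ≤ v n)
    (hV : ∀ n, 0 ≤ V n) (hK : ∀ n, 0 ≤ (state h hinv g v M V n).capital)
    (hcap : ∀ n, (state h hinv g v M V n).capital ≤ 1) {N : ℕ}
    (hslack : ∀ n ≥ N, ¬ CanEscape g v V n (state h hinv g v M V n) ∧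
      1 - (state h hinv g v M V n).capital < V n * (g (cumVar v (n + 1)) - v n)) :
    Summable (weight g v) := by
  set σ := fun n => 1 - (state h hinv g v M V n).capital
  have hσ_succ : ∀ n ≥ N, σ (n + 1) = σ n + V n * v n := fun n hn => by
    simp only [σ, state_succ, step, move_of_not_canEscape (hslack n hn).1, h0]
    ring
  have hgrowth : ∀ n ≥ N, σ n * (1 + weight g v n) ≤ σ (n + 1) := fun n hn => by
    have hlt := (hslack n hn).2
    have hweight : σ n * weight g v n ≤ V n * v n := by
      rw [weight, mul_div_assoc', div_le_iff₀ (hg _)]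
      nlinarith [mul_le_mul_of_nonneg_right hlt.le (hv n), mul_nonneg (hV n) (sq_nonneg (v n))]
    rw [hσ_succ n hn]
    linarith
  by_cases hpos : ∃ n ≥ N, 0 < v n
  · obtain ⟨n₀, hn₀, hv₀⟩ := hpos
    have hV₀ : 0 < V n₀ := (hV n₀).lt_of_ne fun hzero => by
      have := (hslack n₀ hn₀).2
      rw [← hzero, zero_mul] at this
      linarith [hcap n₀]
    have hσ₀ : 0 < σ (n₀ + 1) := by
      rw [hσ_succ n₀ hn₀]
      nlinarith [hcap n₀]
    refine (summable_nat_add_iff (n₀ + 1)).1 (summable_of_mul_one_add_le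
      (σ := fun k => σ (k + (n₀ + 1))) (B := 1) (fun k => weight_nonneg hg hv _)
      (by simpa using hσ₀) (fun k => ?_) (fun k => by linarith [hK (k + (n₀ + 1))]))
    rw [add_right_comm]
    exact hgrowth _ (by omega)
  · push Not at hpos
    refine (summable_nat_add_iff N).1 ?_
    have hzero : (fun k => weight g v (k + N)) = 0 := funext fun k => by
      rw [weight, le_antisymm (hpos _ (by omega)) (hv _), zero_div, Pi.zero_apply]
    rw [hzero]
    exact summable_zero

theorem frequently_canEscape (h0 : h 0 = 0) (hg : ∀ x, 0 < g x) (hv : ∀ n, 0 ≤ v n)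
    (hV : ∀ n, 0 ≤ V n) (hK : ∀ n, 0 ≤ (state h hinv g v M V n).capital)
    (hcap : ∀ n, (state h hinv g v M V n).capital ≤ 1) (hns : ¬ Summable (weight g v)) :
    ∃ᶠ n in atTop, CanEscape g v V n (state h hinv g v M V n) := by
  intro hev
  obtain ⟨N, hN⟩ := eventually_atTop.1 hev
  have hesc : ∀ n ≥ N, (state h hinv g v M V n).escapes = (state h hinv g v M V N).escapes := by
    intro n hn
    induction n, hn using Nat.le_induction with
    | base => rfl
    | succ n hn ih => simp [state_succ, step, hN n hn, ih]
  have hbudget := (not_summable_iff_tendsto_nat_atTop_of_nonneg (weight_nonneg hg hv)).1 hns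
  obtain ⟨N₁, hN₁⟩ := eventually_atTop.1
    ((hbudget.eventually_gt_atTop ((state h hinv g v M V N).escapes : ℝ)).and
      (eventually_ge_atTop N))
  refine hns (summable_weight_of_slack_lt h0 hg hv hV hK hcap (N := N₁) fun n hn =>
    ⟨hN n (hN₁ n hn).2, lt_of_not_ge fun hle => hN n (hN₁ n hn).2 ⟨hle, ?_⟩⟩)
  rw [hesc n (hN₁ n hn).2]
  exact (hN₁ n hn).1

theorem not_tendsto_ratio_of_not_summable (h0 : h 0 = 0) (hg : ∀ x, 0 < g x)
    (hv : ∀ n, 0 ≤ v n) (hV : ∀ n, 0 ≤ V n) (hscale_pos : ∀ n, 0 < scale hinv g v n)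
    (hK : ∀ n, 0 ≤ (state h hinv g v M V n).capital)
    (hcap : ∀ n, (state h hinv g v M V n).capital ≤ 1) (hns : ¬ Summable (weight g v)) (L : ℝ) :
    ¬ Tendsto (ratio h hinv g v M V) atTop (𝓝 L) :=
  not_tendsto_of_frequently_le_abs_sub one_half_pos <|
    (frequently_canEscape h0 hg hv hV hK hcap hns).mono fun _ hesc =>
      half_le_abs_ratio_sub hscale_pos hesc

end Game

end HedgeGame

open HedgeGame in
theorem stmt_11_general (h hinv : ℝ → ℝ)
    (hA0 : ∀ x : ℝ, h x = h |x| ∧ 0 ≤ h x)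
    (hA4 : h 0 = 0)
    (hmono : StrictMonoOn h (Set.Ici (0 : ℝ)))
    (hinv_left : ∀ x : ℝ, 0 ≤ x → hinv (h x) = x)
    (hinv_right : ∀ y : ℝ, 0 ≤ y → h (hinv y) = y)
    (g : ℝ → ℝ) (hgpos : ∀ x, 0 < g x) (hgmono : Monotone g) :
    ∃ R : (ℕ → ℝ) → (ℕ → ℝ) → (ℕ → ℝ) → (ℕ → ℝ) → ℕ → ℝ,
      (∀ m m' v v' M M' V V' : ℕ → ℝ, ∀ n,
        (∀ k ≤ n, m k = m' k) → (∀ k ≤ n, v k = v' k) →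
        (∀ k ≤ n, M k = M' k) → (∀ k ≤ n, V k = V' k) →
        R m v M V n = R m' v' M' V' n) ∧
      ∀ m v M V : ℕ → ℝ, (∀ n, 0 ≤ v n) → (∀ n, 0 ≤ V n) →
        (∀ n, 0 ≤ capitalH h m v M V (R m v M V) n) →
          ((Summable (fun n => v n / g (∑ k ∈ Finset.range (n + 1), v k)) ↔
            ∃ L : ℝ, Tendsto
              (fun n => (∑ k ∈ Finset.range (n + 1), (R m v M V k - m k)) /
                hinv (g (∑ k ∈ Finset.range (n + 1), v k)))
              atTop (nhds L)) ∧
           ∀ n, capitalH h m v M V (R m v M V) n ≤ 1) := by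
  have hsymm : ∀ x, h x = h |x| := fun x => (hA0 x).1
  have hnonneg : ∀ y, 0 ≤ y → 0 ≤ hinv y := fun _ => hinv_nonneg hsymm hinv_left hinv_right
  refine ⟨strategy h hinv g, fun m m' v v' M M' V V' n => strategy_congr,
    fun m v M V hv hV hK => ?_⟩
  have hscale_pos : ∀ n, 0 < scale hinv g v n := fun n =>
    hinv_pos hsymm hinv_left hinv_right hA4 (hgpos _)
  have hscale_mono : Monotone (scale hinv g v) := fun a b hab =>
    monotoneOn_hinv hmono hinv_right hnonneg (hgpos _).le (hgpos _).le
      (hgmono (cumVar_mono hv hab))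
  have hh_scale : ∀ x n, h (oppSign x * scale hinv g v n) = g (cumVar v n) := fun x _ =>
    apply_mul_hinv hsymm hinv_right (abs_oppSign x) (hgpos _).le
  simp only [capitalH_strategy] at hK ⊢
  have hcap : ∀ n, (state h hinv g v M V n).capital ≤ 1 :=
    capital_le_one hA4 hh_scale hscale_pos hv hV
  simp only [sum_range_strategy_sub]
  refine ⟨⟨fun hs => ?_, fun ⟨L, hL⟩ => ?_⟩, hcap⟩
  · obtain ⟨L, hL⟩ := exists_tendsto_ratio_of_summable hgpos hv hscale_pos hscale_mono hs
    exact ⟨L, (tendsto_add_atTop_iff_nat 1).2 hL⟩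
  · by_contra hns
    exact not_tendsto_ratio_of_not_summable hA4 hgpos hv hV hscale_pos hK hcap hns L
      ((tendsto_add_atTop_iff_nat 1).1 hL)

/-- In the unbounded forecasting game with general hedge `h` satisfying
(A0)-(A2) and `h 0 = 0`, with `g` a positive increasing function and
`A n = ∑_{k ≤ n} v k`, Reality can strongly comply with:
`∑ v n / g (A n) < ∞  ↔  (∑_{k ≤ n} (x k - m k)) / (h⁻¹ ∘ g)(A n)` converges. -/
theorem stmt_11 (h hinv : ℝ → ℝ)
    (hA0 : ∀ x : ℝ, h x = h |x| ∧ 0 ≤ h x)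
    (hA1 : ∀ x y : ℝ, 0 < x → x ≤ y → h x / x ≤ h y / y)
    (hA2 : ∀ x y : ℝ, 0 < x → x ≤ y → h y / y ^ 2 ≤ h x / x ^ 2)
    (hA4 : h 0 = 0)
    (hmono : StrictMonoOn h (Set.Ici (0 : ℝ)))
    (hinv_left : ∀ x : ℝ, 0 ≤ x → hinv (h x) = x)
    (hinv_right : ∀ y : ℝ, 0 ≤ y → h (hinv y) = y)
    (g : ℝ → ℝ) (hgpos : ∀ x, 0 < g x) (hgmono : Monotone g) :
    ∃ R : (ℕ → ℝ) → (ℕ → ℝ) → (ℕ → ℝ) → (ℕ → ℝ) → ℕ → ℝ,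
      (∀ m m' v v' M M' V V' : ℕ → ℝ, ∀ n,
        (∀ k ≤ n, m k = m' k) → (∀ k ≤ n, v k = v' k) →
        (∀ k ≤ n, M k = M' k) → (∀ k ≤ n, V k = V' k) →
        R m v M V n = R m' v' M' V' n) ∧
      ∀ m v M V : ℕ → ℝ, (∀ n, 0 ≤ v n) → (∀ n, 0 ≤ V n) →
        (∀ n, 0 ≤ capitalH h m v M V (R m v M V) n) →
          ((Summable (fun n => v n / g (∑ k ∈ Finset.range (n + 1), v k)) ↔
            ∃ L : ℝ, Tendsto
              (fun n => (∑ k ∈ Finset.range (n + 1), (R m v M V k - m k)) /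
                hinv (g (∑ k ∈ Finset.range (n + 1), v k)))
              atTop (nhds L)) ∧
           ∀ n, capitalH h m v M V (R m v M V) n ≤ 1) :=
  stmt_11_general h hinv hA0 hA4 hmono hinv_left hinv_right g hgpos hgmono
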